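/- Let G and H be finite nonbipartite triangle-free graphs of diameter two such that every pair of vertices of G lies on a common cycle of length five and every pair of vertices of H lies on a common cycle of length five (G and H are C5-connected). Then the strong resolving graph (G × H)_SR is isomorphic to the Cartesian product G □ H; equivalently, two distinct vertices (g,h) and (g',h') of G × H are mutually maximally distant if and only if (g = g' and h is adjacent to h' in H) or (h = h' and g is adjacent to g' in G). -/

import Mathlib

open SimpleGraph

variable {V : Type*}

/-- `u` is maximally distant from `v` in `G`: every neighbor `w` of `u`
satisfies `d(v,w) ≤ d(v,u)`. -/
def MaxDistant (G : SimpleGraph V) (u v : V) : Prop :=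
  ∀ w, G.Adj u w → G.dist v w ≤ G.dist v u

/-- `u` and `v` are mutually maximally distant in `G`. -/
def MMD (G : SimpleGraph V) (u v : V) : Prop :=
  MaxDistant G u v ∧ MaxDistant G v u

/-- The boundary of `G`: vertices maximally distant from some vertex. -/
def boundary (G : SimpleGraph V) : Set V := {u | ∃ v, MaxDistant G u v}

/-- The strong resolving graph on the whole vertex set (`G_{SR+I}`):
two vertices are adjacent iff they are distinct and mutually maximally distant. -/
def srGraphI (G : SimpleGraph V) : SimpleGraph V where
  Adj u v := u ≠ v ∧ MMD G u v
  symm.symm := by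
    rintro u v ⟨hne, h1, h2⟩
    exact ⟨hne.symm, h2, h1⟩
  loopless.irrefl := by
    rintro u ⟨hne, _⟩
    exact hne rfl

/-- The strong resolving graph `G_SR`, with vertex set the boundary of `G`. -/
def srGraph (G : SimpleGraph V) : SimpleGraph (boundary G) :=
  (srGraphI G).induce (boundary G)

/-- `u` and `v` are true twins: distinct vertices with equal closed neighborhoods. -/
def TrueTwins (G : SimpleGraph V) (u v : V) : Prop :=
  u ≠ v ∧ insert u (G.neighborSet u) = insert v (G.neighborSet v)

/-- `u` and `v` are false twins: distinct vertices with equal open neighborhoods. -/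
def FalseTwins (G : SimpleGraph V) (u v : V) : Prop :=
  u ≠ v ∧ G.neighborSet u = G.neighborSet v

/-- A vertex is simplicial if its neighborhood induces a complete graph. -/
def IsSimplicial (G : SimpleGraph V) (v : V) : Prop :=
  ∀ a b, G.Adj v a → G.Adj v b → a ≠ b → G.Adj a b

/-- `w` strongly resolves `u` and `v`. -/
def StronglyResolves (G : SimpleGraph V) (w u v : V) : Prop :=
  G.dist w u = G.dist w v + G.dist v u ∨ G.dist w v = G.dist w u + G.dist u v

/-- `S` is a strong metric generator for `G`. -/
def IsStrongMetricGenerator (G : SimpleGraph V) (S : Set V) : Prop :=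
  ∀ u v : V, u ≠ v → ∃ w ∈ S, StronglyResolves G w u v

/-- The strong metric dimension of `G`. -/
noncomputable def sdim (G : SimpleGraph V) : ℕ :=
  sInf {n | ∃ S : Set V, S.ncard = n ∧ IsStrongMetricGenerator G S}

/-- `S` is a vertex cover of `H`. -/
def IsVertexCover (H : SimpleGraph V) (S : Set V) : Prop :=
  ∀ u v : V, H.Adj u v → u ∈ S ∨ v ∈ S

/-- The vertex cover number of `H`. -/
noncomputable def vertexCoverNumber (H : SimpleGraph V) : ℕ :=
  sInf {n | ∃ S : Set V, S.ncard = n ∧ _root_.IsVertexCover H S}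

/-- The graph `G*`: distinct vertices adjacent iff at distance at least two
or true twins. -/
def GStar (G : SimpleGraph V) : SimpleGraph V where
  Adj u v := u ≠ v ∧ (2 ≤ G.dist u v ∨ TrueTwins G u v)
  symm.symm := by
    rintro u v ⟨hne, h | h⟩
    · exact ⟨hne.symm, Or.inl (by rwa [G.dist_comm])⟩
    · exact ⟨hne.symm, Or.inr ⟨h.1.symm, h.2.symm⟩⟩
  loopless.irrefl := by
    rintro u ⟨hne, _⟩
    exact hne rfl

/-- The direct (tensor) product of two graphs. -/
def DirectProd {α β : Type*} (G : SimpleGraph α) (H : SimpleGraph β) :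
    SimpleGraph (α × β) where
  Adj x y := G.Adj x.1 y.1 ∧ H.Adj x.2 y.2
  symm.symm := fun _ _ h => ⟨h.1.symm, h.2.symm⟩
  loopless.irrefl := fun x h => G.loopless.irrefl x.1 h.1

/-- The strong product of two graphs. -/
def StrongProd {α β : Type*} (G : SimpleGraph α) (H : SimpleGraph β) :
    SimpleGraph (α × β) where
  Adj x y := x ≠ y ∧ (x.1 = y.1 ∨ G.Adj x.1 y.1) ∧ (x.2 = y.2 ∨ H.Adj x.2 y.2)
  symm.symm := by
    rintro x y ⟨hne, h1, h2⟩
    exact ⟨hne.symm, h1.imp Eq.symm Adj.symm, h2.imp Eq.symm Adj.symm⟩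
  loopless.irrefl := by
    rintro x ⟨hne, _⟩
    exact hne rfl

/-- The Cartesian sum (disjunctive product) of two graphs. -/
def CartSum {α β : Type*} (G : SimpleGraph α) (H : SimpleGraph β) :
    SimpleGraph (α × β) where
  Adj x y := G.Adj x.1 y.1 ∨ H.Adj x.2 y.2
  symm.symm := fun _ _ h => h.imp Adj.symm Adj.symm
  loopless.irrefl := fun x h => h.elim (G.loopless.irrefl x.1) (H.loopless.irrefl x.2)

/-- The lexicographic product of two graphs. -/
def LexProd {α β : Type*} (G : SimpleGraph α) (H : SimpleGraph β) :
    SimpleGraph (α × β) where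
  Adj x y := G.Adj x.1 y.1 ∨ (x.1 = y.1 ∧ H.Adj x.2 y.2)
  symm.symm := fun _ _ h => h.imp Adj.symm (fun h => ⟨h.1.symm, h.2.symm⟩)
  loopless.irrefl := fun x h => h.elim (G.loopless.irrefl x.1) (fun h => H.loopless.irrefl x.2 h.2)

/-- The disjoint union of `n` copies of the complete graph on `m` vertices. -/
def CopiesComplete (n m : ℕ) : SimpleGraph (Fin n × Fin m) where
  Adj x y := x.1 = y.1 ∧ x.2 ≠ y.2
  symm.symm := fun _ _ h => ⟨h.1.symm, h.2.symm⟩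
  loopless.irrefl := fun x h => h.2 rfl

/-- Every pair of vertices lies on a common cycle of length five. -/
def C5Connected (G : SimpleGraph V) : Prop :=
  ∀ u v : V, ∃ (w : V) (c : G.Walk w w), c.IsCycle ∧ c.length = 5 ∧
    u ∈ c.support ∧ v ∈ c.support

/-!
In a triangle-free graph in which every two vertices lie on a common 5-cycle, the set of lengths
of `u`–`v` walks depends only on whether `u = v`, `u ~ v`, or neither: it consists of all lengths
except `{1, 3}`, `{0, 2}` and `{0, 1}` respectively (a walk grows by 2 by going back and forth along
an edge, and a 5-cycle through `u` and `v` supplies the odd closed walk and the walks of length 3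
and 4 that are needed). A walk in `G × H` is a pair of walks of equal length in `G` and `H`, so a
distance in `G × H` is the least common walk length: it never exceeds 4, and equals 4 exactly for
pairs adjacent in `G □ H`. Such pairs are therefore mutually maximally distant, and every vertex
lies in the boundary. For any other pair `x ≠ y`, some neighbour of `x` is strictly farther from
`y` than `x` is.
-/

lemma Nat.sInf_compl_eq {s : Set ℕ} {k : ℕ} (hk : k ∉ s) (hlt : ∀ n < k, n ∈ s) :
    sInf sᶜ = k :=
  le_antisymm (Nat.sInf_le hk) (le_csInf ⟨k, hk⟩ fun _ hn => not_lt.1 fun h => hn (hlt _ h))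

lemma mmd_of_forall_dist_le {Γ : SimpleGraph V} {u v : V}
    (h : ∀ a b, Γ.dist a b ≤ Γ.dist u v) : MMD Γ u v :=
  ⟨fun w _ => (h v w).trans_eq Γ.dist_comm, fun w _ => h u w⟩

def srGraphIsoOfBoundaryEqUniv {Γ : SimpleGraph V} (h : boundary Γ = Set.univ) :
    srGraph Γ ≃g srGraphI Γ := by
  unfold srGraph
  rw [h]
  exact induceUnivIso _

namespace SimpleGraph

variable {Γ : SimpleGraph V} {u v w a b : V} {m n : ℕ}

lemma CliqueFree.not_adj_of_adj_of_adj (hΓ : Γ.CliqueFree 3) (ha : Γ.Adj v a) (hb : Γ.Adj v b) :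
    ¬Γ.Adj a b :=
  fun hab => isIndepSet_neighborSet_of_triangleFree _ hΓ v ha hb hab.ne hab

def walkLengths (Γ : SimpleGraph V) (u v : V) : Set ℕ :=
  Set.range (Walk.length : Γ.Walk u v → ℕ)

lemma zero_mem_walkLengths_iff : 0 ∈ Γ.walkLengths u v ↔ u = v :=
  Walk.exists_length_eq_zero_iff

lemma one_mem_walkLengths_iff : 1 ∈ Γ.walkLengths u v ↔ Γ.Adj u v :=
  Walk.exists_length_eq_one_iff

lemma succ_mem_walkLengths_iff :
    n + 1 ∈ Γ.walkLengths u v ↔ ∃ w, Γ.Adj u w ∧ n ∈ Γ.walkLengths w v := by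
  constructor
  · rintro ⟨p, hp⟩
    cases p with
    | nil => simp at hp
    | cons h q => exact ⟨_, h, q, by simpa using hp⟩
  · rintro ⟨w, h, q, rfl⟩
    exact ⟨.cons h q, rfl⟩

lemma two_mem_walkLengths_iff : 2 ∈ Γ.walkLengths u v ↔ ∃ w, Γ.Adj u w ∧ Γ.Adj w v := by
  simp only [succ_mem_walkLengths_iff (n := 1), one_mem_walkLengths_iff]

lemma add_two_mem_walkLengths (hu : Γ.Adj u w) (hn : n ∈ Γ.walkLengths u v) :
    n + 2 ∈ Γ.walkLengths u v :=
  succ_mem_walkLengths_iff.2 ⟨w, hu, succ_mem_walkLengths_iff.2 ⟨u, hu.symm, hn⟩⟩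

lemma mem_walkLengths_of_le_of_mod_two_eq (hu : Γ.Adj u w) (hm : m ∈ Γ.walkLengths u v)
    (hmn : m ≤ n) (hpar : n % 2 = m % 2) : n ∈ Γ.walkLengths u v := by
  obtain ⟨k, rfl⟩ : ∃ k, n = m + 2 * k := ⟨(n - m) / 2, by omega⟩
  clear hmn hpar
  induction k with
  | zero => simpa
  | succ k ih => simpa [Nat.mul_succ, ← add_assoc] using add_two_mem_walkLengths hu ih

lemma CliqueFree.two_notMem_walkLengths_of_adj (hΓ : Γ.CliqueFree 3) (h : Γ.Adj u v) :
    2 ∉ Γ.walkLengths u v := by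
  rw [two_mem_walkLengths_iff]
  rintro ⟨w, huw, hwv⟩
  exact hΓ.not_adj_of_adj_of_adj huw.symm hwv h

lemma CliqueFree.three_notMem_walkLengths_self (hΓ : Γ.CliqueFree 3) :
    3 ∉ Γ.walkLengths u u := by
  rw [succ_mem_walkLengths_iff]
  rintro ⟨a, hua, ha⟩
  exact hΓ.two_notMem_walkLengths_of_adj hua.symm ha

end SimpleGraph

namespace C5Connected

variable {Γ : SimpleGraph V} {u v : V}

lemma exists_isCycle_length_five (hΓ : C5Connected Γ) (u v : V) :
    ∃ p : Γ.Walk u u, p.IsCycle ∧ p.length = 5 ∧ v ∈ p.support := by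
  classical
  obtain ⟨w, c, hc, hlen, hu, hv⟩ := hΓ u v
  exact ⟨c.rotate u hu, hc.rotate hu, by simp [hlen], (c.mem_support_rotate_iff u hu).2 hv⟩

lemma exists_pentagon (hΓ : C5Connected Γ) (u v : V) :
    ∃ a b c d, Γ.Adj u a ∧ Γ.Adj a b ∧ Γ.Adj b c ∧ Γ.Adj c d ∧ Γ.Adj d u ∧
      a ≠ c ∧ a ≠ d ∧ b ≠ d ∧ (v = u ∨ v = a ∨ v = b ∨ v = c ∨ v = d) := by
  obtain ⟨p, hc, hp, hv⟩ := hΓ.exists_isCycle_length_five u v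
  have hadj (i : ℕ) (hi : i < 5) := p.adj_getVert_succ (i := i) (hp ▸ hi)
  have hne {i j : ℕ} (hi : 1 ≤ i ∧ i ≤ 5) (hj : 1 ≤ j ∧ j ≤ 5) (hij : i ≠ j) :
      p.getVert i ≠ p.getVert j :=
    fun h => hij <| hc.getVert_injOn (by simpa [hp] using hi) (by simpa [hp] using hj) h
  have hlast : p.getVert 5 = u := hp ▸ p.getVert_length
  obtain ⟨i, rfl, hi⟩ := Walk.mem_support_iff_exists_getVert.1 hv
  refine ⟨p.getVert 1, p.getVert 2, p.getVert 3, p.getVert 4,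
    by simpa using hadj 0 (by norm_num), hadj 1 (by norm_num), hadj 2 (by norm_num),
    hadj 3 (by norm_num), by simpa [hlast] using hadj 4 (by norm_num),
    hne (by norm_num) (by norm_num) (by norm_num), hne (by norm_num) (by norm_num) (by norm_num),
    hne (by norm_num) (by norm_num) (by norm_num), ?_⟩
  rw [hp] at hi
  interval_cases i <;> simp [hlast]

lemma exists_adj (hΓ : C5Connected Γ) (u : V) : ∃ w, Γ.Adj u w := by
  obtain ⟨a, -, -, -, hua, -⟩ := hΓ.exists_pentagon u u
  exact ⟨a, hua⟩

lemma five_mem_walkLengths_self (hΓ : C5Connected Γ) (u : V) : 5 ∈ Γ.walkLengths u u := by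
  obtain ⟨p, -, hp, -⟩ := hΓ.exists_isCycle_length_five u u
  exact ⟨p, hp⟩

lemma four_mem_walkLengths_of_adj (hΓ : C5Connected Γ) (hΓ₃ : Γ.CliqueFree 3)
    (h : Γ.Adj u v) : 4 ∈ Γ.walkLengths u v := by
  obtain ⟨a, b, c, d, hua, hab, hbc, hcd, hdu, -, -, -, rfl | rfl | rfl | rfl | rfl⟩ :=
    hΓ.exists_pentagon u v
  · exact absurd h Γ.irrefl
  · exact ⟨.cons hdu.symm (.cons hcd.symm (.cons hbc.symm (.cons hab.symm .nil))), rfl⟩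
  · exact absurd h (hΓ₃.not_adj_of_adj_of_adj hua.symm hab)
  · exact absurd h (hΓ₃.not_adj_of_adj_of_adj hdu hcd.symm)
  · exact ⟨.cons hua (.cons hab (.cons hbc (.cons hcd .nil))), rfl⟩

lemma exists_adj_adj_of_not_adj (hΓ : C5Connected Γ) (hne : u ≠ v) (hna : ¬Γ.Adj u v) :
    ∃ w, Γ.Adj u w ∧ Γ.Adj v w := by
  obtain ⟨a, b, c, d, hua, hab, hbc, hcd, hdu, -, -, -, rfl | rfl | rfl | rfl | rfl⟩ :=
    hΓ.exists_pentagon u v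
  · exact absurd rfl hne
  · exact absurd hua hna
  · exact ⟨a, hua, hab.symm⟩
  · exact ⟨d, hdu.symm, hcd⟩
  · exact absurd hdu.symm hna

lemma three_mem_walkLengths_of_not_adj (hΓ : C5Connected Γ) (hne : u ≠ v)
    (hna : ¬Γ.Adj u v) : 3 ∈ Γ.walkLengths u v := by
  obtain ⟨a, b, c, d, hua, hab, hbc, hcd, hdu, -, -, -, rfl | rfl | rfl | rfl | rfl⟩ :=
    hΓ.exists_pentagon u v
  · exact absurd rfl hne
  · exact absurd hua hna
  · exact ⟨.cons hdu.symm (.cons hcd.symm (.cons hbc.symm .nil)), rfl⟩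
  · exact ⟨.cons hua (.cons hab (.cons hbc .nil)), rfl⟩
  · exact absurd hdu.symm hna

lemma exists_adj_not_adj_of_ne (hΓ : C5Connected Γ) (hΓ₃ : Γ.CliqueFree 3) (hne : u ≠ v) :
    ∃ w, Γ.Adj u w ∧ v ≠ w ∧ ¬Γ.Adj v w := by
  obtain ⟨a, b, c, d, hua, hab, hbc, hcd, hdu, hac, had, hbd, rfl | rfl | rfl | rfl | rfl⟩ :=
    hΓ.exists_pentagon u v
  · exact absurd rfl hne
  · exact ⟨d, hdu.symm, had, hΓ₃.not_adj_of_adj_of_adj hua hdu.symm⟩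
  · exact ⟨d, hdu.symm, hbd, hΓ₃.not_adj_of_adj_of_adj hbc.symm hcd⟩
  · exact ⟨a, hua, hac.symm, hΓ₃.not_adj_of_adj_of_adj hbc hab.symm⟩
  · exact ⟨a, hua, had.symm, hΓ₃.not_adj_of_adj_of_adj hdu.symm hua⟩

lemma walkLengths_self (hΓ : C5Connected Γ) (hΓ₃ : Γ.CliqueFree 3) (u : V) :
    Γ.walkLengths u u = {1, 3}ᶜ := by
  obtain ⟨w, huw⟩ := hΓ.exists_adj u
  ext n
  simp only [Set.mem_compl_iff, Set.mem_insert_iff, Set.mem_singleton_iff, not_or]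
  refine ⟨fun hn => ⟨?_, ?_⟩, fun ⟨h₁, h₃⟩ => ?_⟩
  · rintro rfl
    exact (one_mem_walkLengths_iff.1 hn).ne rfl
  · rintro rfl
    exact hΓ₃.three_notMem_walkLengths_self hn
  · rcases Nat.mod_two_eq_zero_or_one n with h | h
    · exact mem_walkLengths_of_le_of_mod_two_eq huw (zero_mem_walkLengths_iff.2 rfl)
        n.zero_le (by omega)
    · exact mem_walkLengths_of_le_of_mod_two_eq huw (hΓ.five_mem_walkLengths_self u)
        (by omega) (by omega)

lemma walkLengths_of_adj (hΓ : C5Connected Γ) (hΓ₃ : Γ.CliqueFree 3) (h : Γ.Adj u v) :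
    Γ.walkLengths u v = {0, 2}ᶜ := by
  ext n
  simp only [Set.mem_compl_iff, Set.mem_insert_iff, Set.mem_singleton_iff, not_or]
  refine ⟨fun hn => ⟨?_, ?_⟩, fun ⟨h₀, h₂⟩ => ?_⟩
  · rintro rfl
    exact h.ne (zero_mem_walkLengths_iff.1 hn)
  · rintro rfl
    exact hΓ₃.two_notMem_walkLengths_of_adj h hn
  · rcases Nat.mod_two_eq_zero_or_one n with hn | hn
    · exact mem_walkLengths_of_le_of_mod_two_eq h (hΓ.four_mem_walkLengths_of_adj hΓ₃ h)
        (by omega) (by omega)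
    · exact mem_walkLengths_of_le_of_mod_two_eq h (one_mem_walkLengths_iff.2 h)
        (by omega) (by omega)

lemma walkLengths_of_not_adj (hΓ : C5Connected Γ) (hne : u ≠ v) (hna : ¬Γ.Adj u v) :
    Γ.walkLengths u v = {0, 1}ᶜ := by
  obtain ⟨w, huw, hvw⟩ := hΓ.exists_adj_adj_of_not_adj hne hna
  ext n
  simp only [Set.mem_compl_iff, Set.mem_insert_iff, Set.mem_singleton_iff, not_or]
  refine ⟨fun hn => ⟨?_, ?_⟩, fun ⟨h₀, h₁⟩ => ?_⟩
  · rintro rfl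
    exact hne (zero_mem_walkLengths_iff.1 hn)
  · rintro rfl
    exact hna (one_mem_walkLengths_iff.1 hn)
  · rcases Nat.mod_two_eq_zero_or_one n with hn | hn
    · exact mem_walkLengths_of_le_of_mod_two_eq huw
        (two_mem_walkLengths_iff.2 ⟨w, huw, hvw.symm⟩) (by omega) (by omega)
    · exact mem_walkLengths_of_le_of_mod_two_eq huw
        (hΓ.three_mem_walkLengths_of_not_adj hne hna) (by omega) (by omega)

lemma four_mem_walkLengths (hΓ : C5Connected Γ) (hΓ₃ : Γ.CliqueFree 3) (u v : V) :
    4 ∈ Γ.walkLengths u v := by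
  by_cases hne : u = v
  · subst hne
    simp [hΓ.walkLengths_self hΓ₃]
  by_cases h : Γ.Adj u v
  · simp [hΓ.walkLengths_of_adj hΓ₃ h]
  · simp [hΓ.walkLengths_of_not_adj hne h]

end C5Connected

section DirectProd

variable {α β : Type*} {G : SimpleGraph α} {H : SimpleGraph β} {g g' : α} {h h' : β}

lemma walkLengths_directProd (x y : α × β) :
    (DirectProd G H).walkLengths x y = G.walkLengths x.1 y.1 ∩ H.walkLengths x.2 y.2 := by
  ext n
  induction n generalizing x with
  | zero => simp [zero_mem_walkLengths_iff, Prod.ext_iff]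
  | succ n ih =>
    simp only [Set.mem_inter_iff, succ_mem_walkLengths_iff, ih, Prod.exists]
    constructor
    · rintro ⟨a, b, ⟨ha, hb⟩, hna, hnb⟩
      exact ⟨⟨a, ha, hna⟩, b, hb, hnb⟩
    · rintro ⟨⟨a, ha, hna⟩, b, hb, hnb⟩
      exact ⟨a, b, ⟨ha, hb⟩, hna, hnb⟩

lemma dist_directProd (x y : α × β) :
    (DirectProd G H).dist x y = sInf (G.walkLengths x.1 y.1 ∩ H.walkLengths x.2 y.2) := by
  rw [dist_eq_sInf, ← walkLengths_directProd]
  rfl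

lemma dist_directProd_le_four (hG : C5Connected G) (hG₃ : G.CliqueFree 3)
    (hH : C5Connected H) (hH₃ : H.CliqueFree 3) (x y : α × β) :
    (DirectProd G H).dist x y ≤ 4 := by
  rw [dist_directProd]
  exact Nat.sInf_le ⟨hG.four_mem_walkLengths hG₃ _ _, hH.four_mem_walkLengths hH₃ _ _⟩

lemma dist_directProd_of_eq_of_adj (hG : C5Connected G) (hG₃ : G.CliqueFree 3)
    (hH : C5Connected H) (hH₃ : H.CliqueFree 3) (g : α) (hh : H.Adj h h') :
    (DirectProd G H).dist (g, h) (g, h') = 4 := by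
  rw [dist_directProd, hG.walkLengths_self hG₃, hH.walkLengths_of_adj hH₃ hh,
    ← Set.compl_union]
  exact Nat.sInf_compl_eq (by simp) (by intro n hn; simp; omega)

lemma dist_directProd_of_adj_of_eq (hG : C5Connected G) (hG₃ : G.CliqueFree 3)
    (hH : C5Connected H) (hH₃ : H.CliqueFree 3) (hg : G.Adj g g') (h : β) :
    (DirectProd G H).dist (g, h) (g', h) = 4 := by
  rw [dist_directProd, hG.walkLengths_of_adj hG₃ hg, hH.walkLengths_self hH₃,
    ← Set.compl_union]
  exact Nat.sInf_compl_eq (by simp) (by intro n hn; simp; omega)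

lemma dist_directProd_of_eq_of_not_adj (hG : C5Connected G) (hG₃ : G.CliqueFree 3)
    (hH : C5Connected H) (g : α) (hne : h ≠ h') (hna : ¬H.Adj h h') :
    (DirectProd G H).dist (g, h) (g, h') = 2 := by
  rw [dist_directProd, hG.walkLengths_self hG₃, hH.walkLengths_of_not_adj hne hna,
    ← Set.compl_union]
  exact Nat.sInf_compl_eq (by simp) (by intro n hn; simp; omega)

lemma dist_directProd_of_not_adj_of_eq (hG : C5Connected G) (hH : C5Connected H)
    (hH₃ : H.CliqueFree 3) (hne : g ≠ g') (hna : ¬G.Adj g g') (h : β) :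
    (DirectProd G H).dist (g, h) (g', h) = 2 := by
  rw [dist_directProd, hG.walkLengths_of_not_adj hne hna, hH.walkLengths_self hH₃,
    ← Set.compl_union]
  exact Nat.sInf_compl_eq (by simp) (by intro n hn; simp; omega)

lemma dist_directProd_of_adj_of_not_adj (hG : C5Connected G) (hG₃ : G.CliqueFree 3)
    (hH : C5Connected H) (hg : G.Adj g g') (hne : h ≠ h') (hna : ¬H.Adj h h') :
    (DirectProd G H).dist (g, h) (g', h') = 3 := by
  rw [dist_directProd, hG.walkLengths_of_adj hG₃ hg, hH.walkLengths_of_not_adj hne hna,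
    ← Set.compl_union]
  exact Nat.sInf_compl_eq (by simp) (by intro n hn; simp; omega)

lemma dist_directProd_of_not_adj_of_adj (hG : C5Connected G) (hH : C5Connected H)
    (hH₃ : H.CliqueFree 3) (hne : g ≠ g') (hna : ¬G.Adj g g') (hh : H.Adj h h') :
    (DirectProd G H).dist (g, h) (g', h') = 3 := by
  rw [dist_directProd, hG.walkLengths_of_not_adj hne hna, hH.walkLengths_of_adj hH₃ hh,
    ← Set.compl_union]
  exact Nat.sInf_compl_eq (by simp) (by intro n hn; simp; omega)

lemma dist_directProd_of_not_adj_of_not_adj (hG : C5Connected G) (hH : C5Connected H)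
    (hg : g ≠ g') (hga : ¬G.Adj g g') (hh : h ≠ h') (hha : ¬H.Adj h h') :
    (DirectProd G H).dist (g, h) (g', h') = 2 := by
  rw [dist_directProd, hG.walkLengths_of_not_adj hg hga, hH.walkLengths_of_not_adj hh hha,
    ← Set.compl_union]
  exact Nat.sInf_compl_eq (by simp) (by intro n hn; simp; omega)

lemma dist_directProd_of_boxProd_adj (hG : C5Connected G) (hG₃ : G.CliqueFree 3)
    (hH : C5Connected H) (hH₃ : H.CliqueFree 3) {x y : α × β} (hxy : (G □ H).Adj x y) :
    (DirectProd G H).dist x y = 4 := by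
  obtain ⟨g, h⟩ := x
  obtain ⟨g', h'⟩ := y
  rcases hxy with ⟨hg, rfl : h = h'⟩ | ⟨hh, rfl : g = g'⟩
  · exact dist_directProd_of_adj_of_eq hG hG₃ hH hH₃ hg h
  · exact dist_directProd_of_eq_of_adj hG hG₃ hH hH₃ g hh

lemma exists_adj_dist_lt_of_ne_of_ne (hG : C5Connected G) (hG₃ : G.CliqueFree 3)
    (hH : C5Connected H) (hH₃ : H.CliqueFree 3) (hg : g ≠ g') (hh : h ≠ h') :
    ∃ w, (DirectProd G H).Adj (g, h) w ∧
      (DirectProd G H).dist (g, h) (g', h') < (DirectProd G H).dist (g', h') w := by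
  by_cases hga : G.Adj g g' <;> by_cases hha : H.Adj h h'
  · obtain ⟨k, hk, hh'k, hh'k'⟩ := hH.exists_adj_not_adj_of_ne hH₃ hh
    refine ⟨(g', k), ⟨hga, hk⟩, ?_⟩
    rw [dist_eq_one_iff_adj.2 (show (DirectProd G H).Adj _ _ from ⟨hga, hha⟩),
      dist_directProd_of_eq_of_not_adj hG hG₃ hH g' hh'k hh'k']
    norm_num
  · obtain ⟨k, hk, hh'k⟩ := hH.exists_adj_adj_of_not_adj hh hha
    refine ⟨(g', k), ⟨hga, hk⟩, ?_⟩
    rw [dist_directProd_of_adj_of_not_adj hG hG₃ hH hga hh hha,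
      dist_directProd_of_eq_of_adj hG hG₃ hH hH₃ g' hh'k]
    norm_num
  · obtain ⟨k, hk, hg'k⟩ := hG.exists_adj_adj_of_not_adj hg hga
    refine ⟨(k, h'), ⟨hk, hha⟩, ?_⟩
    rw [dist_directProd_of_not_adj_of_adj hG hH hH₃ hg hga hha,
      dist_directProd_of_adj_of_eq hG hG₃ hH hH₃ hg'k h']
    norm_num
  · obtain ⟨k, hk, hg'k⟩ := hG.exists_adj_adj_of_not_adj hg hga
    obtain ⟨l, hl, hh'l, hh'l'⟩ := hH.exists_adj_not_adj_of_ne hH₃ hh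
    refine ⟨(k, l), ⟨hk, hl⟩, ?_⟩
    rw [dist_directProd_of_not_adj_of_not_adj hG hH hg hga hh hha,
      dist_directProd_of_adj_of_not_adj hG hG₃ hH hg'k hh'l hh'l']
    norm_num

lemma exists_adj_dist_lt_of_not_boxProd_adj (hG : C5Connected G) (hG₃ : G.CliqueFree 3)
    (hH : C5Connected H) (hH₃ : H.CliqueFree 3) {x y : α × β} (hne : x ≠ y)
    (hxy : ¬(G □ H).Adj x y) :
    ∃ w, (DirectProd G H).Adj x w ∧ (DirectProd G H).dist x y < (DirectProd G H).dist y w := by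
  obtain ⟨g, h⟩ := x
  obtain ⟨g', h'⟩ := y
  simp only [boxProd_adj, not_or, not_and] at hxy
  rcases eq_or_ne g g' with rfl | hg
  · have hh : h ≠ h' := fun e => hne (e ▸ rfl)
    obtain ⟨g₁, hg₁⟩ := hG.exists_adj g
    obtain ⟨k, hk, hh'k, hh'k'⟩ := hH.exists_adj_not_adj_of_ne hH₃ hh
    refine ⟨(g₁, k), ⟨hg₁, hk⟩, ?_⟩
    rw [dist_directProd_of_eq_of_not_adj hG hG₃ hH g hh (fun a => hxy.2 a rfl),
      dist_directProd_of_adj_of_not_adj hG hG₃ hH hg₁ hh'k hh'k']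
    norm_num
  rcases eq_or_ne h h' with rfl | hh
  · obtain ⟨h₁, hh₁⟩ := hH.exists_adj h
    obtain ⟨k, hk, hg'k, hg'k'⟩ := hG.exists_adj_not_adj_of_ne hG₃ hg
    refine ⟨(k, h₁), ⟨hk, hh₁⟩, ?_⟩
    rw [dist_directProd_of_not_adj_of_eq hG hH hH₃ hg (fun a => hxy.1 a rfl) h,
      dist_directProd_of_not_adj_of_adj hG hH hH₃ hg'k hg'k' hh₁]
    norm_num
  exact exists_adj_dist_lt_of_ne_of_ne hG hG₃ hH hH₃ hg hh

lemma mmd_directProd_iff_boxProd_adj (hG : C5Connected G) (hG₃ : G.CliqueFree 3)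
    (hH : C5Connected H) (hH₃ : H.CliqueFree 3) {x y : α × β} (hne : x ≠ y) :
    MMD (DirectProd G H) x y ↔ (G □ H).Adj x y := by
  refine ⟨fun hmmd => ?_, fun hxy => mmd_of_forall_dist_le fun a b => ?_⟩
  · by_contra hxy
    obtain ⟨w, hw, hlt⟩ := exists_adj_dist_lt_of_not_boxProd_adj hG hG₃ hH hH₃ hne hxy
    exact (hmmd.1 w hw).not_gt (dist_comm.trans_lt hlt)
  · rw [dist_directProd_of_boxProd_adj hG hG₃ hH hH₃ hxy]
    exact dist_directProd_le_four hG hG₃ hH hH₃ a b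

lemma srGraphI_directProd_eq_boxProd (hG : C5Connected G) (hG₃ : G.CliqueFree 3)
    (hH : C5Connected H) (hH₃ : H.CliqueFree 3) : srGraphI (DirectProd G H) = G □ H := by
  ext x y
  exact ⟨fun h => (mmd_directProd_iff_boxProd_adj hG hG₃ hH hH₃ h.1).1 h.2,
    fun h => ⟨h.ne, (mmd_directProd_iff_boxProd_adj hG hG₃ hH hH₃ h.ne).2 h⟩⟩

lemma boundary_directProd_eq_univ (hG : C5Connected G) (hG₃ : G.CliqueFree 3)
    (hH : C5Connected H) (hH₃ : H.CliqueFree 3) : boundary (DirectProd G H) = Set.univ := by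
  refine Set.eq_univ_of_forall fun ⟨g, h⟩ => ?_
  obtain ⟨h₁, hh₁⟩ := hH.exists_adj h
  refine ⟨(g, h₁), fun w _ => ?_⟩
  rw [dist_directProd_of_eq_of_adj hG hG₃ hH hH₃ g hh₁.symm]
  exact dist_directProd_le_four hG hG₃ hH hH₃ _ w

end DirectProd

theorem stmt17_general {α β : Type*}
    (G : SimpleGraph α) (H : SimpleGraph β)
    (hGtf : G.CliqueFree 3)
    (hGc5 : C5Connected G)
    (hHtf : H.CliqueFree 3)
    (hHc5 : C5Connected H) :
    Nonempty (srGraph (DirectProd G H) ≃g G □ H) ∧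
    (∀ (g g' : α) (h h' : β), (g, h) ≠ (g', h') →
      (MMD (DirectProd G H) (g, h) (g', h') ↔ (G □ H).Adj (g, h) (g', h'))) := by
  refine ⟨⟨?_⟩, fun g g' h h' => mmd_directProd_iff_boxProd_adj hGc5 hGtf hHc5 hHtf⟩
  rw [← srGraphI_directProd_eq_boxProd hGc5 hGtf hHc5 hHtf]
  exact srGraphIsoOfBoundaryEqUniv (boundary_directProd_eq_univ hGc5 hGtf hHc5 hHtf)

theorem stmt17 {α β : Type*} [Fintype α] [Fintype β]
    (G : SimpleGraph α) (H : SimpleGraph β)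
    (hGnb : ¬ G.Colorable 2) (hGtf : G.CliqueFree 3) (hGd : G.diam = 2)
    (hGc5 : C5Connected G)
    (hHnb : ¬ H.Colorable 2) (hHtf : H.CliqueFree 3) (hHd : H.diam = 2)
    (hHc5 : C5Connected H) :
    Nonempty (srGraph (DirectProd G H) ≃g G □ H) ∧
    (∀ (g g' : α) (h h' : β), (g, h) ≠ (g', h') →
      (MMD (DirectProd G H) (g, h) (g', h') ↔ (G □ H).Adj (g, h) (g', h'))) :=
  stmt17_general G H hGtf hGc5 hHtf hHc5
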